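/- arXiv:2008.03478 — 3 statements merged into one kernel-verified Lean document; each statement's English description precedes it below -/
import Mathlib

section
/- Let S be a nonnegative integrable random variable that is NWU, let Y₁,…,Yₙ be i.i.d. copies of S, and let r₁,…,rₙ > 0. Then E[min{Y₁/r₁, …, Yₙ/rₙ}] ≤ E[S] / (r₁ + ⋯ + rₙ). -/
open MeasureTheory ProbabilityTheory Finset

/-!
Writing `M = minᵢ Yᵢ / rᵢ`, independence gives `P(M > t) = ∏ᵢ F̄(t rᵢ)`, and NWU bounds this
product by `F̄(t ∑ᵢ rᵢ) = P(S / ∑ᵢ rᵢ > t)`. Thus `M` is stochastically dominated by `S / ∑ᵢ rᵢ`,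
and the layer-cake formula `E X = ∫₀^∞ P(X > t) dt` turns this into the inequality of means.
-/

lemma Finset.prod_apply_le_apply_sum {ι R : Type*} [CommMonoid R] [PartialOrder R] [MulLeftMono R]
    {f : ℝ → R} (hf : ∀ a b, 0 ≤ a → 0 ≤ b → f a * f b ≤ f (a + b))
    {s : Finset ι} (hs : s.Nonempty) {a : ι → ℝ} (ha : ∀ i ∈ s, 0 ≤ a i) :
    ∏ i ∈ s, f (a i) ≤ f (∑ i ∈ s, a i) := by
  induction hs using Finset.Nonempty.cons_induction with
  | singleton i => simp
  | cons i s _ _ ih =>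
    rw [prod_cons, sum_cons]
    have ha' : ∀ j ∈ s, 0 ≤ a j := fun j hj => ha j (mem_cons_of_mem hj)
    calc f (a i) * ∏ j ∈ s, f (a j) ≤ f (a i) * f (∑ j ∈ s, a j) := mul_le_mul_right (ih ha') _
      _ ≤ f (a i + ∑ j ∈ s, a j) := hf _ _ (ha i (mem_cons_self i s)) (sum_nonneg ha')

lemma Finite.lt_ciInf_iff {ι α : Type*} [ConditionallyCompleteLinearOrder α] [Finite ι]
    [Nonempty ι] {f : ι → α} {a : α} : a < ⨅ i, f i ↔ ∀ i, a < f i := by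
  refine ⟨fun h i => h.trans_le (ciInf_le f i), fun h => ?_⟩
  obtain ⟨i, hi⟩ := exists_eq_ciInf_of_finite (f := f)
  exact hi ▸ h i

lemma ProbabilityTheory.iIndepFun.measure_lt_iInf {Ω ι : Type*} [MeasurableSpace Ω]
    {μ : Measure Ω} [Fintype ι] [Nonempty ι] {X : ι → Ω → ℝ} (hX : iIndepFun X μ) (t : ℝ) :
    μ {ω | t < ⨅ i, X i ω} = ∏ i, μ {ω | t < X i ω} := by
  simp_rw [Finite.lt_ciInf_iff, Set.ofPred_forall]
  exact hX.meas_iInter fun i => ⟨Set.Ioi t, measurableSet_Ioi, rfl⟩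

lemma integral_le_integral_of_measure_lt_le {α : Type*} [MeasurableSpace α] {μ : Measure α}
    {X Y : α → ℝ} (hX : 0 ≤ᵐ[μ] X) (hXm : AEMeasurable X μ) (hY : 0 ≤ᵐ[μ] Y)
    (hYi : Integrable Y μ) (h : ∀ t > 0, μ {ω | t < X ω} ≤ μ {ω | t < Y ω}) :
    ∫ ω, X ω ∂μ ≤ ∫ ω, Y ω ∂μ := by
  rw [integral_eq_lintegral_of_nonneg_ae hX hXm.aestronglyMeasurable,
    integral_eq_lintegral_of_nonneg_ae hY hYi.aestronglyMeasurable]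
  refine ENNReal.toReal_mono hYi.lintegral_lt_top.ne ?_
  rw [lintegral_eq_lintegral_meas_lt μ hX hXm, lintegral_eq_lintegral_meas_lt μ hY hYi.aemeasurable]
  exact setLIntegral_mono' measurableSet_Ioi h

lemma measure_lt_iInf_div_le {Ω ι : Type*} [MeasurableSpace Ω] {μ : Measure Ω} [Fintype ι]
    [Nonempty ι] {Y : ι → Ω → ℝ} {S : Ω → ℝ} (hindep : iIndepFun Y μ)
    (hid : ∀ i, IdentDistrib (Y i) S μ μ) {r : ι → ℝ} (hr : ∀ i, 0 < r i)
    (hsupermul : ∀ a b : ℝ, 0 ≤ a → 0 ≤ b → μ {ω | a < S ω} * μ {ω | b < S ω} ≤ μ {ω | a + b < S ω})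
    {t : ℝ} (ht : 0 ≤ t) : μ {ω | t < ⨅ i, Y i ω / r i} ≤ μ {ω | t < S ω / ∑ i, r i} := by
  have hindep_div : iIndepFun (fun i ω => Y i ω / r i) μ :=
    hindep.comp (fun i y => y / r i) fun i => measurable_div_const _
  rw [hindep_div.measure_lt_iInf]
  calc ∏ i, μ {ω | t < Y i ω / r i} = ∏ i, μ {ω | t * r i < S ω} := by
        refine prod_congr rfl fun i _ => ?_
        simp_rw [lt_div_iff₀ (hr i)]
        exact (hid i).measure_mem_eq measurableSet_Ioi
    _ ≤ μ {ω | ∑ i, t * r i < S ω} :=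
        prod_apply_le_apply_sum hsupermul univ_nonempty fun i _ => mul_nonneg ht (hr i).le
    _ = μ {ω | t < S ω / ∑ i, r i} := by
        simp_rw [← mul_sum, lt_div_iff₀ (sum_pos (fun i _ => hr i) univ_nonempty)]

theorem nwu_expected_min_le_general
    {Ω : Type*} [MeasurableSpace Ω] (P : Measure Ω) [IsProbabilityMeasure P]
    (S : Ω → ℝ) (hS : ∀ ω, 0 ≤ S ω) (hSint : Integrable S P)
    (Fbar : ℝ → ℝ) (hFbar : ∀ t, Fbar t = (P {ω | t < S ω}).toReal)
    (hNWU : ∀ t₁ t₂ : ℝ, 0 ≤ t₁ → 0 ≤ t₂ → Fbar (t₁ + t₂) ≥ Fbar t₁ * Fbar t₂)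
    (n : ℕ) (hn : 0 < n) (Y : Fin n → Ω → ℝ)
    (hindep : iIndepFun Y P)
    (hid : ∀ i, IdentDistrib (Y i) S P P)
    (r : Fin n → ℝ) (hr : ∀ i, 0 < r i) :
    (∫ ω, (⨅ i, Y i ω / r i) ∂P) ≤ (∫ ω, S ω ∂P) / ∑ i, r i := by
  have : Nonempty (Fin n) := ⟨⟨0, hn⟩⟩
  have hR : 0 < ∑ i, r i := sum_pos (fun i _ => hr i) univ_nonempty
  have hY_nonneg : ∀ i, 0 ≤ᵐ[P] Y i := fun i =>
    (hid i).symm.ae_mem_snd measurableSet_Ici (ae_of_all _ hS)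
  have hmin_nonneg : 0 ≤ᵐ[P] fun ω => ⨅ i, Y i ω / r i := by
    filter_upwards [ae_all_iff.2 hY_nonneg] with ω hω
    exact le_ciInf fun i => div_nonneg (hω i) (hr i).le
  have hsupermul : ∀ a b : ℝ, 0 ≤ a → 0 ≤ b →
      P {ω | a < S ω} * P {ω | b < S ω} ≤ P {ω | a + b < S ω} := by
    intro a b ha hb
    rw [← ENNReal.toReal_le_toReal (by finiteness) (by finiteness), ENNReal.toReal_mul,
      ← hFbar, ← hFbar, ← hFbar]
    exact hNWU a b ha hb
  calc ∫ ω, (⨅ i, Y i ω / r i) ∂P ≤ ∫ ω, S ω / ∑ i, r i ∂P :=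
        integral_le_integral_of_measure_lt_le hmin_nonneg
          (AEMeasurable.iInf fun i => (hid i).aemeasurable_fst.div_const _)
          (ae_of_all _ fun ω => div_nonneg (hS ω) hR.le) (hSint.div_const _)
          fun t ht => measure_lt_iInf_div_le hindep hid hr hsupermul ht.le
    _ = (∫ ω, S ω ∂P) / ∑ i, r i := integral_div _ _

/-- For an NWU nonnegative integrable random variable `S`, i.i.d. copies `Y i` and
positive speeds `r i`, `E[min_i Y i / r i] ≤ E[S] / ∑ i, r i`. -/
theorem nwu_expected_min_le
    {Ω : Type*} [MeasurableSpace Ω] (P : Measure Ω) [IsProbabilityMeasure P]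
    (S : Ω → ℝ) (hS : ∀ ω, 0 ≤ S ω) (hSint : Integrable S P)
    (Fbar : ℝ → ℝ) (hFbar : ∀ t, Fbar t = (P {ω | t < S ω}).toReal)
    (hNWU : ∀ t₁ t₂ : ℝ, 0 ≤ t₁ → 0 ≤ t₂ → Fbar (t₁ + t₂) ≥ Fbar t₁ * Fbar t₂)
    (n : ℕ) (hn : 0 < n) (Y : Fin n → Ω → ℝ)
    (hYmeas : ∀ i, Measurable (Y i))
    (hindep : iIndepFun Y P)
    (hid : ∀ i, IdentDistrib (Y i) S P P)
    (r : Fin n → ℝ) (hr : ∀ i, 0 < r i) :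
    (∫ ω, (⨅ i, Y i ω / r i) ∂P) ≤ (∫ ω, S ω ∂P) / ∑ i, r i :=
  nwu_expected_min_le_general P S hS hSint Fbar hFbar hNWU n hn Y hindep hid r hr
end

section
/- Let S be a nonnegative integrable random variable that is NBU, let Y₁,…,Yₙ be i.i.d. copies of S, and let r₁,…,rₙ > 0. Then E[min{Y₁/r₁, …, Yₙ/rₙ}] ≥ E[S] / (r₁ + ⋯ + rₙ). -/
/-!
Write `X = minᵢ Yᵢ / rᵢ` and `s = ∑ᵢ rᵢ`. By independence the survival function of `X` is
`P(X > t) = ∏ᵢ F̄(t rᵢ)`, and iterating the NBU inequality gives `F̄(t s) ≤ ∏ᵢ F̄(t rᵢ)`.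
Integrating over `t > 0` with the layer-cake formula,
`E[X] = ∫ P(X > t) dt ≥ ∫ F̄(t s) dt = E[S] / s`.
-/

open MeasureTheory ProbabilityTheory Finset Set

/-- The new-better-than-used property of a survival function. -/
def IsNBU (F : ℝ → ℝ) : Prop :=
  ∀ t₁ t₂ : ℝ, 0 ≤ t₁ → 0 ≤ t₂ → F (t₁ + t₂) ≤ F t₁ * F t₂

theorem IsNBU.apply_sum_le_prod {ι : Type*} {F : ℝ → ℝ} (hF : IsNBU F) (hF0 : ∀ t, 0 ≤ F t)
    {s : Finset ι} (hs : s.Nonempty) {f : ι → ℝ} (hf : ∀ i ∈ s, 0 ≤ f i) :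
    F (∑ i ∈ s, f i) ≤ ∏ i ∈ s, F (f i) := by
  induction hs using Finset.Nonempty.cons_induction with
  | singleton => simp
  | cons a s _ _ ih =>
    simp only [mem_cons, forall_eq_or_imp] at hf
    rw [sum_cons, prod_cons]
    calc F (f a + ∑ i ∈ s, f i) ≤ F (f a) * F (∑ i ∈ s, f i) :=
          hF _ _ hf.1 (sum_nonneg hf.2)
      _ ≤ F (f a) * ∏ i ∈ s, F (f i) := mul_le_mul_of_nonneg_left (ih hf.2) (hF0 _)

theorem lt_ciInf_iff_of_finite {ι α : Type*} [Finite ι] [Nonempty ι]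
    [ConditionallyCompleteLinearOrder α] {f : ι → α} {a : α} :
    a < ⨅ i, f i ↔ ∀ i, a < f i := by
  obtain ⟨j, hj⟩ := exists_eq_ciInf_of_finite (f := f)
  exact ⟨fun h i => h.trans_le (ciInf_le (Finite.bddBelow_range f) i), fun h => hj ▸ h j⟩

namespace MeasureTheory

variable {α : Type*} [MeasurableSpace α] {μ : Measure α}

theorem Integrable.ciInf {ι : Type*} [Fintype ι] [Nonempty ι] {f : ι → α → ℝ}
    (hf : ∀ i, Integrable (f i) μ) : Integrable (fun a => ⨅ i, f i a) μ := by
  refine Integrable.mono' (integrable_finsetSum univ fun i _ => (hf i).norm)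
    (AEMeasurable.iInf fun i => (hf i).aemeasurable).aestronglyMeasurable (ae_of_all _ fun a => ?_)
  obtain ⟨j, hj⟩ := exists_eq_ciInf_of_finite (f := fun i => f i a)
  rw [← hj]
  exact single_le_sum (f := fun i => ‖f i a‖) (fun i _ => norm_nonneg _) (mem_univ j)

theorem Integrable.integrableOn_measureReal_lt {f : α → ℝ} (hf : Integrable f μ)
    (hf0 : 0 ≤ᵐ[μ] f) : IntegrableOn (fun t => μ.real {a | t < f a}) (Ioi 0) := by
  have hanti : Antitone fun t : ℝ => μ {a | t < f a} :=
    fun _ _ hst => measure_mono fun _ ha => hst.trans_lt ha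
  refine integrable_toReal_of_lintegral_ne_top hanti.measurable.aemeasurable ?_
  rw [← lintegral_eq_lintegral_meas_lt μ hf0 hf.aemeasurable]
  exact hf.lintegral_lt_top.ne

theorem Integrable.integral_Ioi_le_of_le_measureReal_lt {f : α → ℝ} (hf : Integrable f μ)
    (hf0 : 0 ≤ᵐ[μ] f) {g : ℝ → ℝ} (hg0 : ∀ t, 0 ≤ g t)
    (hg : ∀ t > 0, g t ≤ μ.real {a | t < f a}) : ∫ t in Ioi 0, g t ≤ ∫ a, f a ∂μ := by
  rw [hf.integral_eq_integral_meas_lt hf0]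
  exact integral_mono_of_nonneg (ae_of_all _ hg0) (hf.integrableOn_measureReal_lt hf0)
    ((ae_restrict_iff' measurableSet_Ioi).2 (ae_of_all _ hg))

theorem Integrable.integral_Ioi_measureReal_mul_lt {f : α → ℝ} (hf : Integrable f μ)
    (hf0 : 0 ≤ᵐ[μ] f) {c : ℝ} (hc : 0 < c) :
    ∫ t in Ioi 0, μ.real {a | t * c < f a} = c⁻¹ * ∫ a, f a ∂μ := by
  have := integral_comp_mul_left_Ioi (fun u => μ.real {a | u < f a}) 0 hc
  simp only [mul_zero, smul_eq_mul] at this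
  simp_rw [mul_comm _ c, this, hf.integral_eq_integral_meas_lt hf0]

end MeasureTheory

theorem ProbabilityTheory.iIndepFun.measureReal_lt_iInf_div {Ω ι : Type*} [MeasurableSpace Ω]
    {P : Measure Ω} [Fintype ι] [Nonempty ι] {Y : ι → Ω → ℝ} (hY : iIndepFun Y P)
    {r : ι → ℝ} (hr : ∀ i, 0 < r i) (t : ℝ) :
    P.real {ω | t < ⨅ i, Y i ω / r i} = ∏ i, P.real {ω | t * r i < Y i ω} := by
  have hset : {ω | t < ⨅ i, Y i ω / r i} = ⋂ i, Y i ⁻¹' Ioi (t * r i) := by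
    ext ω
    simp [lt_ciInf_iff_of_finite, lt_div_iff₀ (hr _)]
  rw [measureReal_def, hset, hY.meas_iInter fun i => ⟨Ioi (t * r i), measurableSet_Ioi, rfl⟩,
    ENNReal.toReal_prod]
  rfl

theorem nbu_expected_min_ge_general
    {Ω : Type*} [MeasurableSpace Ω] (P : Measure Ω)
    (S : Ω → ℝ) (hS : ∀ ω, 0 ≤ S ω) (hSint : Integrable S P)
    (Fbar : ℝ → ℝ) (hFbar : ∀ t, Fbar t = (P {ω | t < S ω}).toReal)
    (hNBU : ∀ t₁ t₂ : ℝ, 0 ≤ t₁ → 0 ≤ t₂ → Fbar (t₁ + t₂) ≤ Fbar t₁ * Fbar t₂)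
    (n : ℕ) (hn : 0 < n) (Y : Fin n → Ω → ℝ)
    (hindep : iIndepFun Y P)
    (hid : ∀ i, IdentDistrib (Y i) S P P)
    (r : Fin n → ℝ) (hr : ∀ i, 0 < r i) :
    (∫ ω, (⨅ i, Y i ω / r i) ∂P) ≥ (∫ ω, S ω ∂P) / ∑ i, r i := by
  obtain rfl : Fbar = fun t => P.real {ω | t < S ω} := funext hFbar
  have : Nonempty (Fin n) := ⟨⟨0, hn⟩⟩
  have hY0 : ∀ i, 0 ≤ᵐ[P] Y i := fun i =>
    (hid i).symm.ae_snd measurableSet_Ici (ae_of_all _ hS)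
  have hmin0 : 0 ≤ᵐ[P] fun ω => ⨅ i, Y i ω / r i := by
    filter_upwards [ae_all_iff.2 hY0] with ω hω using le_ciInf fun i => div_nonneg (hω i) (hr i).le
  have hmin : Integrable (fun ω => ⨅ i, Y i ω / r i) P :=
    Integrable.ciInf fun i => ((hid i).integrable_iff.2 hSint).div_const _
  have hsurv : ∀ i t, P.real {ω | t < Y i ω} = P.real {ω | t < S ω} := fun i t =>
    congrArg ENNReal.toReal ((hid i).measure_mem_eq measurableSet_Ioi)
  rw [ge_iff_le, div_eq_inv_mul, ← hSint.integral_Ioi_measureReal_mul_lt (ae_of_all _ hS)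
    (sum_pos (fun i _ => hr i) univ_nonempty)]
  refine hmin.integral_Ioi_le_of_le_measureReal_lt hmin0 (fun _ => measureReal_nonneg)
    fun t ht => ?_
  rw [hindep.measureReal_lt_iInf_div hr, mul_sum]
  simp only [hsurv]
  exact IsNBU.apply_sum_le_prod (F := fun t => P.real {ω | t < S ω}) hNBU
    (fun _ => measureReal_nonneg) univ_nonempty fun i _ => mul_nonneg ht.le (hr i).le

/-- For an NBU nonnegative integrable random variable `S`, i.i.d. copies `Y i` and
positive speeds `r i`, `E[min_i Y i / r i] ≥ E[S] / ∑ i, r i`. -/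
theorem nbu_expected_min_ge
    {Ω : Type*} [MeasurableSpace Ω] (P : Measure Ω) [IsProbabilityMeasure P]
    (S : Ω → ℝ) (hS : ∀ ω, 0 ≤ S ω) (hSint : Integrable S P)
    (Fbar : ℝ → ℝ) (hFbar : ∀ t, Fbar t = (P {ω | t < S ω}).toReal)
    (hNBU : ∀ t₁ t₂ : ℝ, 0 ≤ t₁ → 0 ≤ t₂ → Fbar (t₁ + t₂) ≤ Fbar t₁ * Fbar t₂)
    (n : ℕ) (hn : 0 < n) (Y : Fin n → Ω → ℝ)
    (hYmeas : ∀ i, Measurable (Y i))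
    (hindep : iIndepFun Y P)
    (hid : ∀ i, IdentDistrib (Y i) S P P)
    (r : Fin n → ℝ) (hr : ∀ i, 0 < r i) :
    (∫ ω, (⨅ i, Y i ω / r i) ∂P) ≥ (∫ ω, S ω ∂P) / ∑ i, r i :=
  nbu_expected_min_ge_general P S hS hSint Fbar hFbar hNBU n hn Y hindep hid r hr
end

section
/- Let S be a nonnegative integrable random variable that is strictly NWU, i.e. F̄(t₁+t₂) > F̄(t₁)F̄(t₂) for all t₁,t₂ > 0 with F̄(t₁), F̄(t₂) > 0, and suppose P(S > 0) > 0. If Y₁, Y₂ are i.i.d. copies of S, then E[min{Y₁, Y₂}] < E[S]/2. -/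
/-!
By the layer-cake formula `E[S] = ∫₀^∞ F̄(t) dt`, and by independence the tail of
`min Y₁ Y₂` is `F̄²`, so `E[min Y₁ Y₂] = ∫₀^∞ F̄(t)² dt`. Strict NWU on the diagonal gives
`F̄(t)² ≤ F̄(2t)`, strictly on an interval `(0, ε]` where `F̄ > 0` (such `ε` exists as
`P(S > 0) > 0`), and `∫₀^∞ F̄(2t) dt = E[S] / 2`.
-/

open MeasureTheory ProbabilityTheory Set

section Analysis

variable {X : Type*} [MeasurableSpace X] {μ : Measure X}

theorem setIntegral_lt_setIntegral_of_le_of_lt_on {f g : X → ℝ} {s t : Set X}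
    (hs : MeasurableSet s) (hf : IntegrableOn f s μ) (hg : IntegrableOn g s μ)
    (hle : ∀ x ∈ s, f x ≤ g x) (hts : t ⊆ s) (ht : μ t ≠ 0) (hlt : ∀ x ∈ t, f x < g x) :
    ∫ x in s, f x ∂μ < ∫ x in s, g x ∂μ := by
  rw [← sub_pos, ← integral_sub hg hf]
  refine (setIntegral_pos_iff_support_of_nonneg_ae ?_ (hg.sub hf)).2 ?_
  · exact (ae_restrict_iff' hs).2 (ae_of_all _ fun x hx => sub_nonneg.2 (hle x hx))
  · refine (pos_iff_ne_zero.2 ht).trans_le (measure_mono fun x hx => ⟨?_, hts hx⟩)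
    exact sub_ne_zero.2 (hlt x hx).ne'

variable {F : ℝ → ℝ}

theorem integral_mul_self_lt_integral_comp_two_mul (hF : 0 ≤ F) (hanti : Antitone F)
    (hint : IntegrableOn F (Ioi 0))
    (hsup : ∀ t, 0 < t → 0 < F t → F t * F t < F (t + t)) {ε : ℝ} (hε : 0 < ε)
    (hFε : 0 < F ε) :
    ∫ t in Ioi 0, F t * F t < ∫ t in Ioi 0, F (2 * t) := by
  have hsq : IntegrableOn (fun t => F t * F t) (Ioi 0) := by
    refine (hint.const_mul (F 0)).mono'
      (hanti.measurable.mul hanti.measurable).aestronglyMeasurable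
      ((ae_restrict_iff' measurableSet_Ioi).2 (ae_of_all _ fun t (ht : 0 < t) => ?_))
    rw [Real.norm_of_nonneg (mul_nonneg (hF t) (hF t))]
    exact mul_le_mul_of_nonneg_right (hanti ht.le) (hF t)
  have htwo : IntegrableOn (fun t => F (2 * t)) (Ioi 0) :=
    (integrableOn_Ioi_comp_mul_left_iff F 0 two_pos).2 (by simpa using hint)
  refine setIntegral_lt_setIntegral_of_le_of_lt_on measurableSet_Ioi hsq htwo (fun t ht => ?_)
    Ioc_subset_Ioi_self (by simpa using hε) fun t ht => ?_
  · rcases (hF t).eq_or_lt with h | h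
    · simpa [← h] using hF (2 * t)
    · exact two_mul t ▸ (hsup t ht h).le
  · have hFt : 0 < F t := hFε.trans_le (hanti ht.2)
    exact two_mul t ▸ hsup t ht.1 hFt

theorem integral_mul_self_lt_half_integral (hF : 0 ≤ F) (hanti : Antitone F)
    (hint : IntegrableOn F (Ioi 0))
    (hsup : ∀ t, 0 < t → 0 < F t → F t * F t < F (t + t)) {ε : ℝ} (hε : 0 < ε)
    (hFε : 0 < F ε) :
    ∫ t in Ioi 0, F t * F t < (∫ t in Ioi 0, F t) / 2 := by
  have hhalf : ∫ t in Ioi 0, F (2 * t) = (∫ t in Ioi 0, F t) / 2 := by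
    rw [integral_comp_mul_left_Ioi F 0 two_pos, mul_zero, smul_eq_mul, inv_mul_eq_div]
  exact hhalf ▸ integral_mul_self_lt_integral_comp_two_mul hF hanti hint hsup hε hFε

end Analysis

section Tail

variable {Ω : Type*} [MeasurableSpace Ω] {μ : Measure Ω}

theorem antitone_measureReal_lt [IsFiniteMeasure μ] (f : Ω → ℝ) :
    Antitone fun t : ℝ => μ.real {ω | t < f ω} :=
  fun _ _ hst => measureReal_mono fun _ hω => hst.trans_lt hω

theorem MeasureTheory.Integrable.integrableOn_measureReal_lt_s5 {f : Ω → ℝ} (hf : Integrable f μ)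
    (hnn : 0 ≤ᵐ[μ] f) : IntegrableOn (fun t => μ.real {ω | t < f ω}) (Ioi 0) := by
  have hmeas : Measurable fun t : ℝ => μ {ω | t < f ω} :=
    Antitone.measurable fun _ _ hst => measure_mono fun _ hω => hst.trans_lt hω
  refine integrable_toReal_of_lintegral_ne_top hmeas.aemeasurable ?_
  rw [← lintegral_eq_lintegral_meas_lt μ hnn hf.aemeasurable]
  exact hf.lintegral_lt_top.ne

theorem exists_pos_measure_lt_ne_zero {f : Ω → ℝ} (h : μ {ω | 0 < f ω} ≠ 0) :
    ∃ ε > 0, μ {ω | ε < f ω} ≠ 0 := by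
  by_contra! h'
  refine h (measure_mono_null (fun ω hω => ?_)
    (measure_iUnion_null fun n : ℕ => h' (1 / (n + 1)) (by positivity)))
  exact mem_iUnion.2 (exists_nat_one_div_lt (show 0 < f ω from hω))

theorem ProbabilityTheory.IndepFun.measure_lt_min {Y₁ Y₂ : Ω → ℝ} (h : IndepFun Y₁ Y₂ μ)
    (t : ℝ) :
    μ {ω | t < min (Y₁ ω) (Y₂ ω)} = μ {ω | t < Y₁ ω} * μ {ω | t < Y₂ ω} := by
  simp only [lt_min_iff, ofPred_and]
  exact h.measure_inter_preimage_eq_mul _ _ measurableSet_Ioi measurableSet_Ioi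

theorem ProbabilityTheory.IndepFun.integral_min {Y₁ Y₂ : Ω → ℝ} (h : IndepFun Y₁ Y₂ μ)
    (h₁ : Integrable Y₁ μ) (h₂ : Integrable Y₂ μ) (hnn₁ : 0 ≤ᵐ[μ] Y₁) (hnn₂ : 0 ≤ᵐ[μ] Y₂) :
    ∫ ω, min (Y₁ ω) (Y₂ ω) ∂μ = ∫ t in Ioi 0, μ.real {ω | t < Y₁ ω} * μ.real {ω | t < Y₂ ω} := by
  have hnn : 0 ≤ᵐ[μ] fun ω => min (Y₁ ω) (Y₂ ω) := by
    filter_upwards [hnn₁, hnn₂] with ω hω₁ hω₂ using le_min hω₁ hω₂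
  have hmin : Integrable (fun ω => min (Y₁ ω) (Y₂ ω)) μ := h₁.inf h₂
  rw [hmin.integral_eq_integral_meas_lt hnn]
  simp only [measureReal_def, h.measure_lt_min, ENNReal.toReal_mul]

end Tail

theorem strictly_nwu_expected_min_lt_half_general
    {Ω : Type*} [MeasurableSpace Ω] (P : Measure Ω) [IsProbabilityMeasure P]
    (S : Ω → ℝ) (hS : ∀ ω, 0 ≤ S ω) (hSint : Integrable S P)
    (Fbar : ℝ → ℝ) (hFbar : ∀ t, Fbar t = (P {ω | t < S ω}).toReal)
    (hStrictNWU : ∀ t₁ t₂ : ℝ, 0 < t₁ → 0 < t₂ → 0 < Fbar t₁ → 0 < Fbar t₂ →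
      Fbar t₁ * Fbar t₂ < Fbar (t₁ + t₂))
    (hpos : 0 < Fbar 0)
    (Y₁ Y₂ : Ω → ℝ)
    (hindep : IndepFun Y₁ Y₂ P)
    (hid₁ : IdentDistrib Y₁ S P P) (hid₂ : IdentDistrib Y₂ S P P) :
    (∫ ω, min (Y₁ ω) (Y₂ ω) ∂P) < (∫ ω, S ω ∂P) / 2 := by
  obtain rfl : Fbar = fun t => P.real {ω | t < S ω} := funext hFbar
  have hSnn : 0 ≤ᵐ[P] S := ae_of_all _ hS
  have hYnn {Y : Ω → ℝ} (hY : IdentDistrib Y S P P) : 0 ≤ᵐ[P] Y :=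
    hY.symm.ae_snd measurableSet_Ici hSnn
  have htail {Y : Ω → ℝ} (hY : IdentDistrib Y S P P) (t : ℝ) :
      P.real {ω | t < Y ω} = P.real {ω | t < S ω} :=
    congrArg ENNReal.toReal (hY.measure_mem_eq measurableSet_Ioi)
  obtain ⟨ε, hε, hSε⟩ := exists_pos_measure_lt_ne_zero ((measureReal_ne_zero_iff).1 hpos.ne')
  have hFε : 0 < P.real {ω | ε < S ω} :=
    measureReal_nonneg.lt_of_ne' ((measureReal_ne_zero_iff).2 hSε)
  calc ∫ ω, min (Y₁ ω) (Y₂ ω) ∂P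
      = ∫ t in Ioi 0, P.real {ω | t < S ω} * P.real {ω | t < S ω} := by
        rw [hindep.integral_min (hid₁.integrable_iff.2 hSint) (hid₂.integrable_iff.2 hSint)
          (hYnn hid₁) (hYnn hid₂)]
        simp only [htail hid₁, htail hid₂]
    _ < (∫ t in Ioi 0, P.real {ω | t < S ω}) / 2 :=
        integral_mul_self_lt_half_integral (fun _ => measureReal_nonneg)
          (antitone_measureReal_lt S) (hSint.integrableOn_measureReal_lt_s5 hSnn)
          (fun t ht hFt => hStrictNWU t t ht ht hFt hFt) hε hFε
    _ = (∫ ω, S ω ∂P) / 2 := by rw [hSint.integral_eq_integral_meas_lt hSnn]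

/-- For a strictly NWU nonnegative integrable random variable `S` with `P(S > 0) > 0`,
and `Y₁, Y₂` i.i.d. copies of `S`, `E[min{Y₁, Y₂}] < E[S] / 2`. -/
theorem strictly_nwu_expected_min_lt_half
    {Ω : Type*} [MeasurableSpace Ω] (P : Measure Ω) [IsProbabilityMeasure P]
    (S : Ω → ℝ) (hS : ∀ ω, 0 ≤ S ω) (hSint : Integrable S P)
    (Fbar : ℝ → ℝ) (hFbar : ∀ t, Fbar t = (P {ω | t < S ω}).toReal)
    (hStrictNWU : ∀ t₁ t₂ : ℝ, 0 < t₁ → 0 < t₂ → 0 < Fbar t₁ → 0 < Fbar t₂ →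
      Fbar t₁ * Fbar t₂ < Fbar (t₁ + t₂))
    (hpos : 0 < Fbar 0)
    (Y₁ Y₂ : Ω → ℝ) (hY₁ : Measurable Y₁) (hY₂ : Measurable Y₂)
    (hindep : IndepFun Y₁ Y₂ P)
    (hid₁ : IdentDistrib Y₁ S P P) (hid₂ : IdentDistrib Y₂ S P P) :
    (∫ ω, min (Y₁ ω) (Y₂ ω) ∂P) < (∫ ω, S ω ∂P) / 2 :=
  strictly_nwu_expected_min_lt_half_general P S hS hSint Fbar hFbar hStrictNWU hpos Y₁ Y₂ hindep
    hid₁ hid₂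
end
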